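/- A distributive module does not contain a direct sum of two nonzero isomorphic submodules; that is, every distributive module is square-free. -/
import Mathlib


/-- A distributive module is square-free: it does not contain a direct sum of two
nonzero isomorphic submodules. -/
theorem distributive_is_square_free (R : Type*) [Ring R] (M : Type*) [AddCommGroup M]
    [Module R M]
    (hdist : ∀ N P Q : Submodule R M, N ⊓ (P ⊔ Q) = (N ⊓ P) ⊔ (N ⊓ Q)) :
    ∀ N P : Submodule R M, N ⊓ P = ⊥ → Nonempty (N ≃ₗ[R] P) → N = ⊥ := by
  rintro N P hNP ⟨f⟩
  -- the key disjointness fact on elements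
  have hdisj : ∀ x : M, x ∈ N → x ∈ P → x = 0 := by
    intro x hxN hxP
    have : x ∈ N ⊓ P := ⟨hxN, hxP⟩
    rw [hNP] at this
    simpa using this
  set g : N →ₗ[R] M := N.subtype + P.subtype.comp f.toLinearMap with hg
  set D := LinearMap.range g with hD
  have hgapp : ∀ n : N, g n = (n : M) + (f n : M) := fun n => rfl
  have hND : N ⊓ D = ⊥ := by
    rw [eq_bot_iff]
    rintro x ⟨hxN, n, hn⟩
    rw [hgapp] at hn
    have hfn0 : (f n : M) = 0 := by
      apply hdisj
      · have : (f n : M) = x - (n : M) := by rw [← hn]; abel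
        rw [this]; exact N.sub_mem hxN n.2
      · exact (f n).2
    have hn0 : n = 0 := by
      have : f n = 0 := Subtype.ext hfn0
      simpa using f.injective (by simpa using this)
    rw [hn0] at hn
    simp at hn
    simpa [← hn] using (Submodule.zero_mem ⊥)
  have hPD : P ⊓ D = ⊥ := by
    rw [eq_bot_iff]
    rintro x ⟨hxP, n, hn⟩
    rw [hgapp] at hn
    have hn0 : (n : M) = 0 := by
      apply hdisj
      · exact n.2
      · have : (n : M) = x - (f n : M) := by rw [← hn]; abel
        rw [this]; exact P.sub_mem hxP (f n).2
    have : n = 0 := Subtype.ext hn0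
    rw [this] at hn
    simp at hn
    simpa [← hn] using (Submodule.zero_mem ⊥)
  have hle : N ≤ P ⊔ D := by
    intro x hx
    have : x = (-(f ⟨x, hx⟩ : M)) + g ⟨x, hx⟩ := by rw [hgapp]; abel
    rw [this]
    exact Submodule.add_mem_sup (P.neg_mem (f ⟨x, hx⟩).2) ⟨⟨x, hx⟩, rfl⟩
  have : N = N ⊓ (P ⊔ D) := (inf_eq_left.mpr hle).symm
  rw [this, hdist, hNP, hND, sup_bot_eq]
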